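/- arXiv:1810.02926 — 4 statements merged into one kernel-verified Lean document; each statement's English description precedes it below -/
import Mathlib

section
/- If a matrix A ∈ ℝ^{m×N} satisfies the restricted eigenvalue property of order s with parameters (α,δ), then A satisfies the null space property of order s: for all z ∈ ℝ^N and all S ⊂ 𝒥 with #S = s, one has ‖z_S‖₂ ≤ (ρ/√s)‖z_{S^c}‖₁ + τ‖Az‖₂, where ρ = 1/α and τ = 1/√(1−δ). -/
open MeasureTheory Real

noncomputable section

/-- The ℓ¹ norm on `ℝ^k`. -/
def l1norm {k : ℕ} (z : Fin k → ℝ) : ℝ := ∑ i, |z i|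

/-- The ℓ² norm on `ℝ^k`. -/
def l2norm {k : ℕ} (z : Fin k → ℝ) : ℝ := Real.sqrt (∑ i, (z i) ^ 2)

/-- The restriction `z_S` of `z` to an index set `S`. -/
def restr {k : ℕ} (S : Finset (Fin k)) (z : Fin k → ℝ) : Fin k → ℝ :=
  fun i => if i ∈ S then z i else 0

/-- The cone `C(s;α) = ⋃_{#S = s} {z : ‖z_{Sᶜ}‖₁ ≤ α √s ‖z_S‖₂}`. -/
def coneC {k : ℕ} (s : ℕ) (α : ℝ) : Set (Fin k → ℝ) :=
  {z | ∃ S : Finset (Fin k), S.card = s ∧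
    l1norm (restr Sᶜ z) ≤ α * Real.sqrt s * l2norm (restr S z)}

lemma l1norm_nonneg {k : ℕ} (z : Fin k → ℝ) : 0 ≤ l1norm z :=
  Finset.sum_nonneg fun i _ => abs_nonneg _

lemma l2norm_nonneg {k : ℕ} (z : Fin k → ℝ) : 0 ≤ l2norm z :=
  Real.sqrt_nonneg _

lemma l2norm_restr_le {k : ℕ} (S : Finset (Fin k)) (z : Fin k → ℝ) :
    l2norm (restr S z) ≤ l2norm z := by
  apply Real.sqrt_le_sqrt
  apply Finset.sum_le_sum
  intro i _
  simp only [restr]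
  split_ifs <;> simp [sq_nonneg]

theorem stmt_1 (m N s : ℕ) (A : Matrix (Fin m) (Fin N) ℝ) (α δ : ℝ)
    (hα : 1 < α) (hδ0 : 0 < δ) (hδ1 : δ < 1)
    (hREP : ∀ z ∈ coneC s α, (1 - δ) * l2norm z ^ 2 ≤ l2norm (A.mulVec z) ^ 2) :
    ∀ (z : Fin N → ℝ) (S : Finset (Fin N)), S.card = s →
      l2norm (restr S z) ≤ (1 / α) / Real.sqrt s * l1norm (restr Sᶜ z)
        + 1 / Real.sqrt (1 - δ) * l2norm (A.mulVec z) := by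
  intro z S hS
  have hL1 := l1norm_nonneg (restr Sᶜ z)
  have hL2 := l2norm_nonneg (restr S z)
  have hAz := l2norm_nonneg (A.mulVec z)
  have hα0 : (0:ℝ) < α := lt_trans one_pos hα
  by_cases hc : l1norm (restr Sᶜ z) ≤ α * Real.sqrt s * l2norm (restr S z)
  · have h := hREP z ⟨S, hS, hc⟩
    have hden : (0:ℝ) < 1 - δ := by linarith
    have ht : (0:ℝ) < Real.sqrt (1 - δ) := Real.sqrt_pos.mpr hden
    have ht2 : Real.sqrt (1 - δ) ^ 2 = 1 - δ := Real.sq_sqrt hden.le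
    have hz := l2norm_nonneg z
    have hkey : Real.sqrt (1 - δ) * l2norm z ≤ l2norm (A.mulVec z) := by
      nlinarith [mul_nonneg ht.le hz]
    have h1 : l2norm (restr S z) ≤ l2norm z := l2norm_restr_le S z
    have h2 : l2norm z ≤ 1 / Real.sqrt (1 - δ) * l2norm (A.mulVec z) := by
      rw [div_mul_eq_mul_div, le_div_iff₀ ht]
      linarith [hkey]
    have h3 : 0 ≤ (1 / α) / Real.sqrt s * l1norm (restr Sᶜ z) := by positivity
    linarith
  · push_neg at hc
    rcases Nat.eq_zero_or_pos s with hs | hs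
    · subst hs
      have : S = ∅ := Finset.card_eq_zero.mp hS
      subst this
      have : l2norm (restr (∅ : Finset (Fin N)) z) = 0 := by
        simp [l2norm, restr]
      rw [this]
      positivity
    · have hss : (0:ℝ) < Real.sqrt s := Real.sqrt_pos.mpr (by exact_mod_cast hs)
      have h4 : 0 ≤ 1 / Real.sqrt (1 - δ) * l2norm (A.mulVec z) := by
        have : (0:ℝ) ≤ 1 - δ := by linarith
        positivity
      have : l2norm (restr S z) ≤ (1 / α) / Real.sqrt s * l1norm (restr Sᶜ z) := by
        rw [div_div, div_mul_eq_mul_div, le_div_iff₀ (by positivity)]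
        nlinarith
      linarith

end
end

section
/- For every β > 0 and every 0 ≤ τ < 1, one has ∫_{−1}^{1} exp(−β√(1−y²))/(1−y²)^τ dϱ(y) ≤ 2Γ(2−2τ)·β^{2τ−2}, where Γ denotes the gamma function and ϱ is the uniform probability measure on [−1,1]. -/
open MeasureTheory Real

noncomputable section

/-- The uniform probability measure on `[-1,1]`. -/
def unif : Measure ℝ := (2 : ENNReal)⁻¹ • volume.restrict (Set.Icc (-1 : ℝ) 1)

instance : IsProbabilityMeasure unif := by
  constructor
  simp only [unif, Measure.smul_apply, Measure.restrict_apply MeasurableSet.univ,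
    Set.univ_inter, Real.volume_Icc, smul_eq_mul]
  rw [show (1 : ℝ) - (-1) = 2 by norm_num]
  rw [ENNReal.ofReal_ofNat]
  exact ENNReal.inv_mul_cancel (by norm_num) (by norm_num)

/-- The envelope bound `Ω(y) = (2/√π) (1-y²)^{-1/4}` of the Legendre polynomials. -/
def env (y : ℝ) : ℝ := (2 / Real.sqrt π) / (1 - y ^ 2) ^ ((1 : ℝ) / 4)

theorem stmt_8 (β τ : ℝ) (hβ : 0 < β) (hτ0 : 0 ≤ τ) (hτ1 : τ < 1) :
    ∫ y, Real.exp (-β * Real.sqrt (1 - y ^ 2)) / (1 - y ^ 2) ^ τ ∂unif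
      ≤ 2 * Real.Gamma (2 - 2 * τ) * β ^ (2 * τ - 2) := by
  have hτ2 : (0:ℝ) < 2 - 2 * τ := by linarith
  set f : ℝ → ℝ := fun y => Real.exp (-β * Real.sqrt (1 - y ^ 2)) / (1 - y ^ 2) ^ τ with hfdef
  set F : ℝ → ℝ := fun t => t ^ (-τ) * Real.exp (-β * t ^ ((1:ℝ)/2)) with hFdef
  have keyval : ∫ t in Set.Ioi (0:ℝ), F t = 2 * Real.Gamma (2 - 2 * τ) * β ^ (2 * τ - 2) := by
    rw [hFdef]
    rw [integral_rpow_mul_exp_neg_mul_rpow (by norm_num) (by linarith) hβ]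
    rw [show -(-τ + 1) / (1/2 : ℝ) = 2 * τ - 2 by ring,
        show (-τ + 1) / (1/2 : ℝ) = 2 - 2 * τ by ring]
    ring
  have hΓpos : 0 < Real.Gamma (2 - 2 * τ) := Real.Gamma_pos_of_pos hτ2
  have hpos : 0 < 2 * Real.Gamma (2 - 2 * τ) * β ^ (2 * τ - 2) := by positivity
  have hIntF : IntegrableOn F (Set.Ioi 0) := by
    by_contra h
    rw [integral_undef h] at keyval
    linarith
  have hFnn : ∀ t : ℝ, 0 ≤ t → 0 ≤ F t := fun t ht =>
    mul_nonneg (Real.rpow_nonneg ht _) (Real.exp_nonneg _)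
  set g : ℝ → ℝ := fun y => F (1 - |y|) with hgdef
  -- interval integrability of F on [0,1]
  have hF01 : IntervalIntegrable F volume 0 1 :=
    (intervalIntegrable_iff_integrableOn_Ioc_of_le zero_le_one).mpr
      (hIntF.mono_set Set.Ioc_subset_Ioi_self)
  have hg1' : IntervalIntegrable (fun y => F (1 - y)) volume 0 1 := by
    have := (hF01.comp_sub_left 1).symm
    simpa using this
  have hg2' : IntervalIntegrable (fun y => F (1 + y)) volume (-1) 0 := by
    have := hF01.comp_add_left 1
    simpa using this
  have hg01 : IntegrableOn g (Set.Icc 0 1) := by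
    refine IntegrableOn.congr_fun (f := fun y => F (1 - y)) ?_ ?_ measurableSet_Icc
    · exact (intervalIntegrable_iff_integrableOn_Icc_of_le zero_le_one).mp hg1'
    · intro y hy
      simp [hgdef, abs_of_nonneg hy.1]
  have hgneg : IntegrableOn g (Set.Icc (-1) 0) := by
    refine IntegrableOn.congr_fun (f := fun y => F (1 + y)) ?_ ?_ measurableSet_Icc
    · exact (intervalIntegrable_iff_integrableOn_Icc_of_le (by norm_num)).mp hg2'
    · intro y hy
      simp [hgdef, abs_of_nonpos hy.2, sub_neg_eq_add]
  have hgIcc : IntegrableOn g (Set.Icc (-1) 1) := by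
    have hU : Set.Icc (-1:ℝ) 1 = Set.Icc (-1) 0 ∪ Set.Icc 0 1 :=
      (Set.Icc_union_Icc_eq_Icc (by norm_num) (by norm_num)).symm
    rw [hU]
    exact hgneg.union hg01
  -- pointwise bound on [-1,1]
  have hfg : ∀ y ∈ Set.Icc (-1:ℝ) 1, f y ≤ g y := by
    intro y hy
    have hyabs : |y| ≤ 1 := abs_le.mpr ⟨hy.1, hy.2⟩
    have hb0 : 0 ≤ 1 - |y| := by linarith
    have ha : 1 - y ^ 2 = (1 - |y|) * (1 + |y|) := by
      rw [← sq_abs]; ring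
    have hba : 1 - |y| ≤ 1 - y ^ 2 := by
      rw [ha]; nlinarith [abs_nonneg y]
    rcases eq_or_lt_of_le hb0 with h0 | h0
    · -- |y| = 1, both sides evaluated at 0
      have hy2 : 1 - y ^ 2 = 0 := by rw [ha, ← h0]; ring
      rcases eq_or_lt_of_le hτ0 with hτ | hτ
      · simp [hfdef, hgdef, hFdef, hy2, ← h0, ← hτ]
      · have h1 : (0:ℝ) ^ τ = 0 := Real.zero_rpow (ne_of_gt hτ)
        have h2 : (0:ℝ) ^ (-τ) = 0 := Real.zero_rpow (by linarith)
        simp [hfdef, hgdef, hFdef, hy2, ← h0, h1, h2]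
    · have ha0 : 0 < 1 - y ^ 2 := lt_of_lt_of_le h0 hba
      have e1 : Real.exp (-β * Real.sqrt (1 - y ^ 2))
          ≤ Real.exp (-β * (1 - |y|) ^ ((1:ℝ)/2)) := by
        rw [← Real.sqrt_eq_rpow]
        apply Real.exp_le_exp.mpr
        have hs : Real.sqrt (1 - |y|) ≤ Real.sqrt (1 - y ^ 2) := Real.sqrt_le_sqrt hba
        nlinarith [hs]
      have e2 : (1 - y ^ 2) ^ (-τ) ≤ (1 - |y|) ^ (-τ) :=
        Real.rpow_le_rpow_of_nonpos h0 hba (neg_nonpos.mpr hτ0)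
      have hfy : f y = Real.exp (-β * Real.sqrt (1 - y ^ 2)) * (1 - y ^ 2) ^ (-τ) := by
        rw [hfdef]
        simp only []
        rw [Real.rpow_neg (le_of_lt ha0), div_eq_mul_inv]
      have hgy : g y = (1 - |y|) ^ (-τ) * Real.exp (-β * (1 - |y|) ^ ((1:ℝ)/2)) := rfl
      rw [hfy, hgy, mul_comm ((1 - |y|) ^ (-τ))]
      exact mul_le_mul e1 e2 (Real.rpow_nonneg (le_of_lt ha0) _) (Real.exp_nonneg _)
  -- compare integrals over Icc (-1) 1
  have hmono : ∫ y in Set.Icc (-1:ℝ) 1, f y ≤ ∫ y in Set.Icc (-1:ℝ) 1, g y := by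
    refine integral_mono_of_nonneg ?_ hgIcc ?_
    · refine (ae_restrict_iff' measurableSet_Icc).mpr (ae_of_all _ fun y hy => ?_)
      have h1 : (0:ℝ) ≤ 1 - y ^ 2 := by nlinarith [hy.1, hy.2]
      exact div_nonneg (Real.exp_nonneg _) (Real.rpow_nonneg h1 _)
    · exact (ae_restrict_iff' measurableSet_Icc).mpr (ae_of_all _ hfg)
  -- compute ∫ g over Icc (-1) 1
  have hcomp : ∫ y in Set.Icc (-1:ℝ) 1, g y = 2 * ∫ t in Set.Ioc (0:ℝ) 1, F t := by
    rw [MeasureTheory.integral_Icc_eq_integral_Ioc,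
      ← intervalIntegral.integral_of_le (by norm_num : (-1:ℝ) ≤ 1)]
    have hgI2 : IntervalIntegrable g volume 0 1 :=
      (intervalIntegrable_iff_integrableOn_Ioc_of_le zero_le_one).mpr
        (hg01.mono_set Set.Ioc_subset_Icc_self)
    have hgI1 : IntervalIntegrable g volume (-1) 0 :=
      (intervalIntegrable_iff_integrableOn_Ioc_of_le (by norm_num)).mpr
        (hgneg.mono_set Set.Ioc_subset_Icc_self)
    rw [← intervalIntegral.integral_add_adjacent_intervals hgI1 hgI2]
    have heven : ∫ y in (-1:ℝ)..0, g y = ∫ y in (0:ℝ)..1, g y := by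
      have := intervalIntegral.integral_comp_neg (a := (0:ℝ)) (b := 1) (f := g)
      simp only [hgdef, abs_neg, neg_zero, neg_one_mul] at this ⊢
      rw [← this]
    have hshift : ∫ y in (0:ℝ)..1, g y = ∫ t in (0:ℝ)..1, F t := by
      have hcg : ∫ y in (0:ℝ)..1, g y = ∫ y in (0:ℝ)..1, F (1 - y) := by
        apply intervalIntegral.integral_congr
        intro y hy
        rw [Set.uIcc_of_le zero_le_one] at hy
        simp [hgdef, abs_of_nonneg hy.1]
      rw [hcg]
      simp
    rw [heven, hshift, intervalIntegral.integral_of_le zero_le_one]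
    ring
  have hlast : ∫ t in Set.Ioc (0:ℝ) 1, F t ≤ ∫ t in Set.Ioi (0:ℝ), F t := by
    refine setIntegral_mono_set hIntF ?_ ?_
    · exact (ae_restrict_iff' measurableSet_Ioi).mpr (ae_of_all _ fun t ht => hFnn t (le_of_lt ht))
    · exact HasSubset.Subset.eventuallyLE Set.Ioc_subset_Ioi_self
  -- assemble
  rw [show unif = (2 : ENNReal)⁻¹ • volume.restrict (Set.Icc (-1 : ℝ) 1) from rfl,
    integral_smul_measure]
  have htoReal : ((2 : ENNReal)⁻¹).toReal = 1/2 := by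
    rw [ENNReal.toReal_inv]; norm_num
  rw [htoReal, smul_eq_mul]
  have := hmono.trans (le_of_eq hcomp)
  rw [← keyval]
  linarith
end
end

section
/- For every integer d ≥ 2 and every M with 0 < M < ((d−1)/e)^{d−1}, one has K_d(M) ≥ (M/(d−1)^{d−1})·exp(−(d−1)·(log((d−1)/M^{1/(d−1)}))^{1/2}); consequently, log(K_d(M)) ≥ −log((d−1)^{d−1}/M) − (d−1)^{1/2}·(log((d−1)^{d−1}/M))^{1/2}. -/
open Real

noncomputable section

/-- `H_d(β) = β (log(1/β))^{d-1}`. -/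
def Hd (d : ℕ) (β : ℝ) : ℝ := β * Real.log (1 / β) ^ (d - 1)

lemma exp_ge_add_sq (s : ℝ) (hs : 0 ≤ s) : s + s ^ 2 ≤ Real.exp s := by
  have h := Real.sum_le_exp_of_nonneg hs 4
  have hsum : ∑ i ∈ Finset.range 4, s ^ i / i.factorial
      = 1 + s + s ^ 2 / 2 + s ^ 3 / 6 := by
    simp [Finset.sum_range_succ, Nat.factorial]
  rw [hsum] at h
  nlinarith [sq_nonneg (s - 2), sq_nonneg s, mul_nonneg (mul_nonneg hs hs) hs,
    mul_nonneg (sq_nonneg (s - 2)) hs]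

/-- If `K = K_d(M)`, i.e. `K` is the (unique) element of `(0, e^{-(d-1)})` with `H_d(K) = M`,
then the stated lower bounds on `K_d(M)` and `log K_d(M)` hold. -/
theorem stmt_14 (d : ℕ) (hd : 2 ≤ d) (M K : ℝ)
    (hM0 : 0 < M) (hM1 : M < (((d : ℝ) - 1) / Real.exp 1) ^ (d - 1))
    (hK0 : 0 < K) (hK1 : K < Real.exp (-((d : ℝ) - 1)))
    (hK : Hd d K = M) :
    K ≥ M / ((d : ℝ) - 1) ^ (d - 1)
        * Real.exp (-((d : ℝ) - 1)
            * Real.sqrt (Real.log (((d : ℝ) - 1) / M ^ (1 / ((d : ℝ) - 1))))) ∧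
    Real.log K ≥ -Real.log (((d : ℝ) - 1) ^ (d - 1) / M)
        - Real.sqrt ((d : ℝ) - 1) * Real.sqrt (Real.log (((d : ℝ) - 1) ^ (d - 1) / M)) := by
  set n : ℕ := d - 1 with hn
  set c : ℝ := (d : ℝ) - 1 with hcdef
  have hc : c = (n : ℝ) := by
    rw [hcdef, hn, Nat.cast_sub (by omega : 1 ≤ d)]; norm_num
  have hc1 : (1 : ℝ) ≤ c := by
    rw [hc]; exact_mod_cast (by omega : 1 ≤ n)
  have hc0 : (0 : ℝ) < c := lt_of_lt_of_le one_pos hc1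
  set L : ℝ := -Real.log K with hLdef
  have hL : c < L := by
    have := Real.log_lt_log hK0 hK1
    rw [Real.log_exp] at this
    linarith
  have hL0 : (0 : ℝ) < L := lt_trans hc0 hL
  have hM : M = K * L ^ n := by
    rw [← hK, Hd, one_div, Real.log_inv]
  have hlogL : Real.log M = -L + n * Real.log L := by
    rw [hM, Real.log_mul (ne_of_gt hK0) (by positivity), Real.log_pow, hLdef]
    ring
  set t : ℝ := L / c with htdef
  have ht1 : 1 < t := (one_lt_div hc0).mpr hL
  have ht0 : 0 < t := lt_trans one_pos ht1
  set s : ℝ := Real.log t with hsdef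
  have hs : 0 ≤ s := Real.log_nonneg ht1.le
  have hts : t = Real.exp s := (Real.exp_log ht0).symm
  have hlogLt : Real.log L = Real.log c + s := by
    rw [hsdef, htdef, Real.log_div (ne_of_gt hL0) (ne_of_gt hc0)]; ring
  set A : ℝ := t - s with hAdef
  have hA1 : 1 ≤ A := by
    have := Real.log_le_sub_one_of_pos ht0
    rw [hAdef]; linarith
  have hA0 : 0 ≤ A := le_trans zero_le_one hA1
  -- core inequality
  have hcore : s ≤ Real.sqrt A := by
    rw [show Real.sqrt A = Real.sqrt A from rfl]
    have hsq : s ^ 2 ≤ A := by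
      have := exp_ge_add_sq s hs
      rw [hAdef, hts]; linarith
    calc s = Real.sqrt (s ^ 2) := by rw [Real.sqrt_sq hs]
    _ ≤ Real.sqrt A := Real.sqrt_le_sqrt hsq
  -- identify the two logarithms
  have hA_eq : Real.log (c / M ^ (1 / c)) = A := by
    rw [Real.log_div (ne_of_gt hc0) (by positivity),
      Real.log_rpow hM0, hlogL, hlogLt, hAdef, htdef, hc]
    have hn0 : (n : ℝ) ≠ 0 := by rw [← hc]; exact hc0.ne'
    field_simp
    ring
  have hB_eq : Real.log (c ^ n / M) = c * A := by
    rw [Real.log_div (by positivity) (ne_of_gt hM0), Real.log_pow, hlogL, hlogLt,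
      hAdef, htdef, ← hc]
    field_simp [hc0.ne']
    ring
  have hLct : L = c * t := by rw [htdef]; field_simp
  have hcs : c * s ≤ c * Real.sqrt A := mul_le_mul_of_nonneg_left hcore hc0.le
  constructor
  · -- first bound
    rw [ge_iff_le, show (((d : ℝ) - 1) ^ (d - 1)) = c ^ n from rfl, hA_eq]
    have htn : M / c ^ n = K * Real.exp (c * s) := by
      rw [hM, hLct, mul_pow, hts, ← Real.exp_nat_mul, hc]
      field_simp
    rw [htn, mul_assoc, ← Real.exp_add]
    calc K * Real.exp (c * s + -c * Real.sqrt A)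
        ≤ K * Real.exp 0 := by
          apply mul_le_mul_of_nonneg_left _ hK0.le
          apply Real.exp_le_exp.mpr
          linarith
      _ = K := by rw [Real.exp_zero, mul_one]
  · -- second bound
    rw [ge_iff_le, show (((d : ℝ) - 1) ^ (d - 1)) = c ^ n from rfl, hB_eq]
    have hsqrt : Real.sqrt c * Real.sqrt (c * A) = c * Real.sqrt A := by
      rw [Real.sqrt_mul hc0.le, ← mul_assoc, Real.mul_self_sqrt hc0.le]
    rw [hsqrt]
    have hKlog : Real.log K = -L := by rw [hLdef]; ring
    rw [hKlog, hLct]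
    nlinarith [hcs]

end
end

section
/- Let d ≥ 1 be an integer and define v_d(r) = ϱ({y ∈ [−1,1]^d : ∏_{k=1}^d (1−y_k²) ≤ r}), where ϱ is the uniform probability measure on [−1,1]^d. Then for every 0 < r ≤ 1, (r/(2(d−1)!))·(log(1/√r))^{d−1} < v_d(r) ≤ (r/(d−1)!)·(log(2^d e/√r))^{d−1}. -/
open MeasureTheory Real

noncomputable section

/-- The uniform probability measure on `[-1,1]^d`. -/
def unifd (d : ℕ) : Measure (Fin d → ℝ) := Measure.pi fun _ => unif

/-- The multivariate envelope bound `Ω(y) = 2^d / (π^{d/2} ∏_k (1-y_k²)^{1/4})`. -/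
def envM (d : ℕ) (y : Fin d → ℝ) : ℝ :=
  2 ^ d / (π ^ ((d : ℝ) / 2) * ∏ k, (1 - y k ^ 2) ^ ((1 : ℝ) / 4))

/-!
Integrating out the first coordinate gives `v_{d+1}(s) = ∫ v_d(s / (1 - y²)) dϱ(y)`. The slice is
the whole cube once `y² ≥ 1 - s`, so by symmetry
`v_{d+1}(s) = (1 - √(1 - s)) + ∫₀^√(1-s) v_d(s / (1 - y²)) dy`.
Writing `ℓ(s) = log (1 / √s) = -log s / 2`, one has
`ℓ(s / (1 - y²)) = ℓ(s) + log (1 + y) - artanh y` with `0 ≤ log (1 + y) ≤ log 2`, and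
`(K - artanh y)^m / (1 - y²)` has the exact antiderivative `-(K - artanh y)^(m+1) / (m + 1)`.
Hence bounds of the form `c s (ℓ(s) + a)^m / m!` pass from dimension `m + 1` to `m + 2`, starting
from `v_1(s) = 1 - √(1 - s) ∈ (s/2, s]`. In the upper bound the boundary term `1 - √(1 - s) ≤ s`
is absorbed using `d! ≤ (d log 2 + 1)^d`; this is where `2^d e` comes from.
-/

open Set
open scoped ENNReal Nat

namespace Real

lemma artanh_eq_log_sub_half_log {x : ℝ} (hx : x ∈ Ioo (-1) 1) :
    artanh x = log (1 + x) - log (1 - x ^ 2) / 2 := by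
  obtain ⟨h1, h2⟩ := hx
  rw [artanh_eq_half_log ⟨h1.le, h2.le⟩, show 1 - x ^ 2 = (1 + x) * (1 - x) by ring,
    log_div (by linarith) (by linarith), log_mul (by linarith) (by linarith)]
  ring

lemma hasDerivAt_artanh {x : ℝ} (hx : x ∈ Ioo (-1) 1) :
    HasDerivAt artanh (1 - x ^ 2)⁻¹ x := by
  obtain ⟨h1, h2⟩ := hx
  have hlog : HasDerivAt (fun y => (log (1 + y) - log (1 - y)) / 2) (1 - x ^ 2)⁻¹ x := by
    refine ((((hasDerivAt_id' x).const_add 1).log (by linarith)).fun_sub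
      (((hasDerivAt_id' x).const_sub 1).log (by linarith))).div_const 2 |>.congr_deriv ?_
    have : 1 + x ≠ 0 := by linarith
    have : 1 - x ≠ 0 := by linarith
    have : 1 - x ^ 2 ≠ 0 := by nlinarith
    field_simp
    ring
  refine hlog.congr_of_eventuallyEq ?_
  filter_upwards [Ioo_mem_nhds h1 h2] with y hy
  rw [artanh_eq_half_log ⟨hy.1.le, hy.2.le⟩, log_div (by linarith [hy.1]) (by linarith [hy.2])]
  ring

end Real

lemma half_lt_log_two : 1 / 2 < log 2 := by
  linarith [log_two_gt_d9]

/-- AM–GM on the pairs `(j + 1) (n - j)`, whose product over `j < n` is `(n!)²`. -/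
lemma Nat.factorial_le_pow_add_one_div_two (n : ℕ) : (n ! : ℝ) ≤ ((n + 1) / 2) ^ n := by
  have hsq : (n ! : ℝ) ^ 2 = ∏ j ∈ Finset.range n, ((j + 1 : ℝ) * (n - j)) := by
    have hrev : ∏ j ∈ Finset.range n, ((n : ℝ) - j) = ∏ j ∈ Finset.range n, ((j : ℝ) + 1) := by
      rw [← Finset.prod_range_reflect (fun j => ((j : ℝ) + 1))]
      refine Finset.prod_congr rfl fun j hj => ?_
      rw [Finset.mem_range] at hj
      rw [Nat.cast_sub (by omega), Nat.cast_sub (by omega)]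
      push_cast
      ring
    rw [Finset.prod_mul_distrib, hrev, sq]
    exact_mod_cast congrArg₂ (· * ·) (Finset.prod_range_add_one_eq_factorial n).symm
      (Finset.prod_range_add_one_eq_factorial n).symm
  have hle : (n ! : ℝ) ^ 2 ≤ (((n + 1) / 2) ^ n) ^ 2 := by
    rw [hsq, ← pow_mul, mul_comm, pow_mul]
    calc ∏ j ∈ Finset.range n, ((j + 1 : ℝ) * (n - j))
        ≤ ∏ _j ∈ Finset.range n, (((n : ℝ) + 1) / 2) ^ 2 := by
          refine Finset.prod_le_prod (fun j hj => ?_) (fun j _ => ?_)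
          · have : (j : ℝ) < n := by exact_mod_cast Finset.mem_range.1 hj
            nlinarith
          · nlinarith [sq_nonneg ((j : ℝ) + 1 - (n - j))]
      _ = _ := by rw [Finset.prod_const, Finset.card_range]
  exact (pow_le_pow_iff_left₀ (by positivity) (by positivity) two_ne_zero).1 hle

lemma factorial_le_pow_log_two (n : ℕ) : (n ! : ℝ) ≤ (n * log 2 + 1) ^ n := by
  refine (Nat.factorial_le_pow_add_one_div_two n).trans (pow_le_pow_left₀ (by positivity) ?_ n)
  nlinarith [half_lt_log_two, (n.cast_nonneg : (0 : ℝ) ≤ n)]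

lemma continuousOn_artanh_pow_div {m : ℕ} {K : ℝ} :
    ContinuousOn (fun x => (K - artanh x) ^ m / (1 - x ^ 2)) (Ioo (-1) 1) := by
  intro x hx
  have : 1 - x ^ 2 ≠ 0 := by nlinarith [hx.1, hx.2]
  exact (((continuousAt_const.sub (hasDerivAt_artanh hx).continuousAt).pow m).div
    (by fun_prop) this).continuousWithinAt

lemma integral_artanh_pow_div (m : ℕ) (K : ℝ) {b : ℝ} (hb0 : 0 ≤ b) (hb1 : b < 1) :
    ∫ x in 0..b, (K - artanh x) ^ m / (1 - x ^ 2)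
      = (K ^ (m + 1) - (K - artanh b) ^ (m + 1)) / (m + 1) := by
  have hsub : uIcc 0 b ⊆ Ioo (-1) 1 := by
    rw [uIcc_of_le hb0]; exact Icc_subset_Ioo (by norm_num) hb1
  have hderiv : ∀ x ∈ uIcc 0 b, HasDerivAt (fun x => -(K - artanh x) ^ (m + 1) / (m + 1))
      ((K - artanh x) ^ m / (1 - x ^ 2)) x := by
    intro x hx
    refine (((hasDerivAt_artanh (hsub hx)).const_sub K).pow (m + 1)).neg.div_const _
      |>.congr_deriv ?_
    field_simp
    push_cast
    ring
  rw [intervalIntegral.integral_eq_sub_of_hasDerivAt hderiv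
    (continuousOn_artanh_pow_div.mono hsub).intervalIntegrable, artanh_zero]
  ring

lemma setLIntegral_artanh_pow_div (m : ℕ) {C K b : ℝ} (hC : 0 ≤ C) (hb0 : 0 ≤ b) (hb1 : b < 1)
    (hK : artanh b ≤ K) :
    ∫⁻ x in Ioo 0 b, ENNReal.ofReal (C * ((K - artanh x) ^ m / (1 - x ^ 2)))
      = ENNReal.ofReal (C * ((K ^ (m + 1) - (K - artanh b) ^ (m + 1)) / (m + 1))) := by
  have hsub : Icc 0 b ⊆ Ioo (-1) 1 := Icc_subset_Ioo (by norm_num) hb1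
  have hint : IntegrableOn (fun x => C * ((K - artanh x) ^ m / (1 - x ^ 2))) (Ioo 0 b) :=
    (((continuousOn_artanh_pow_div.mono hsub).const_smul C).integrableOn_compact
      isCompact_Icc).mono_set Ioo_subset_Icc_self
  have hnonneg : ∀ x ∈ Ioo 0 b, 0 ≤ C * ((K - artanh x) ^ m / (1 - x ^ 2)) := by
    intro x hx
    have hxK : artanh x ≤ K := (artanh_le_artanh (by linarith [hx.1]) hb1 hx.2.le).trans hK
    have : 0 < 1 - x ^ 2 := by nlinarith [hx.1, hx.2]
    exact mul_nonneg hC (div_nonneg (pow_nonneg (by linarith) m) this.le)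
  rw [← ofReal_integral_eq_lintegral_ofReal hint
    ((ae_restrict_iff' measurableSet_Ioo).2 (ae_of_all _ hnonneg)),
    ← integral_Ioc_eq_integral_Ioo, ← intervalIntegral.integral_of_le hb0,
    intervalIntegral.integral_const_mul, integral_artanh_pow_div m K hb0 hb1]

lemma sqrt_one_sub_mem_Ico {s : ℝ} (hs : 0 < s) : √(1 - s) ∈ Ico 0 1 :=
  ⟨sqrt_nonneg _, (sqrt_lt' one_pos).2 (by linarith)⟩

lemma one_sub_sqrt_one_sub_le {s : ℝ} (hs0 : 0 ≤ s) (hs1 : s ≤ 1) : 1 - √(1 - s) ≤ s := by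
  have : 1 - s ≤ √(1 - s) := (le_sqrt (by linarith) (by linarith)).2 (by nlinarith)
  linarith

lemma half_lt_one_sub_sqrt_one_sub {s : ℝ} (hs0 : 0 < s) (hs1 : s ≤ 1) :
    s / 2 < 1 - √(1 - s) := by
  have : √(1 - s) < 1 - s / 2 := (sqrt_lt' (by linarith)).2 (by nlinarith)
  linarith

lemma artanh_sqrt_one_sub {s : ℝ} (hs0 : 0 < s) (hs1 : s ≤ 1) :
    artanh √(1 - s) = -log s / 2 + log (1 + √(1 - s)) := by
  obtain ⟨hx0, hx1⟩ := sqrt_one_sub_mem_Ico hs0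
  rw [artanh_eq_log_sub_half_log ⟨by linarith, hx1⟩, sq_sqrt (by linarith), sub_sub_cancel]
  ring

lemma neg_log_div_one_sub_sq {s y : ℝ} (hs : 0 < s) (hy : y ∈ Ioo (-1) 1) :
    -log (s / (1 - y ^ 2)) / 2 = -log s / 2 + log (1 + y) - artanh y := by
  have : 0 < 1 - y ^ 2 := by nlinarith [hy.1, hy.2]
  rw [log_div hs.ne' this.ne', artanh_eq_log_sub_half_log hy]
  ring

lemma div_one_sub_sq_mem_Ioo {s y : ℝ} (hs : 0 < s) (hy : y ∈ Ioo 0 √(1 - s)) :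
    s / (1 - y ^ 2) ∈ Ioo 0 1 := by
  have := (lt_sqrt hy.1.le).1 hy.2
  exact ⟨div_pos hs (by linarith), (div_lt_one (by linarith)).2 (by linarith)⟩

lemma artanh_sqrt_one_sub_mem_Icc {s : ℝ} (hs0 : 0 < s) (hs1 : s ≤ 1) :
    artanh √(1 - s) ∈ Icc (-log s / 2) (-log s / 2 + log 2) := by
  obtain ⟨hx0, hx1⟩ := sqrt_one_sub_mem_Ico hs0
  rw [artanh_sqrt_one_sub hs0 hs1]
  exact ⟨by linarith [log_nonneg (by linarith : 1 ≤ 1 + √(1 - s))],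
    by linarith [log_le_log (by linarith) (by linarith : 1 + √(1 - s) ≤ 2)]⟩

lemma neg_log_div_one_sub_sq_mem_Icc {s y : ℝ} (hs : 0 < s) (hy : y ∈ Ioo 0 √(1 - s)) :
    -log (s / (1 - y ^ 2)) / 2 ∈ Icc (-log s / 2 - artanh y) (-log s / 2 - artanh y + log 2) := by
  have hy1 : y < 1 := hy.2.trans (sqrt_one_sub_mem_Ico hs).2
  rw [neg_log_div_one_sub_sq hs ⟨by linarith [hy.1], hy1⟩]
  exact ⟨by linarith [log_nonneg (by linarith [hy.1] : 1 ≤ 1 + y)],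
    by linarith [log_le_log (by linarith [hy.1]) (by linarith : 1 + y ≤ 2)]⟩

def prodSublevel (d : ℕ) (s : ℝ) : Set (Fin d → ℝ) :=
  {y | (∀ k, y k ∈ Icc (-1 : ℝ) 1) ∧ ∏ k, (1 - y k ^ 2) ≤ s}

lemma measurableSet_cube (d : ℕ) : MeasurableSet {y : Fin d → ℝ | ∀ k, y k ∈ Icc (-1 : ℝ) 1} := by
  simp only [ofPred_forall]
  exact MeasurableSet.iInter fun k => measurableSet_Icc.preimage (measurable_pi_apply k)

lemma measurable_prod_one_sub_sq (d : ℕ) :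
    Measurable fun y : Fin d → ℝ => ∏ k, (1 - y k ^ 2) :=
  Finset.measurable_prod _ fun k _ => by fun_prop

lemma unif_eq_smul_restrict_Ioo : unif = (2 : ℝ≥0∞)⁻¹ • volume.restrict (Ioo (-1 : ℝ) 1) := by
  rw [unif, Measure.restrict_congr_set Ioo_ae_eq_Icc]

lemma ae_unif_mem_Ioo : ∀ᵐ y ∂unif, y ∈ Ioo (-1 : ℝ) 1 := by
  rw [unif_eq_smul_restrict_Ioo]
  exact Measure.ae_smul_measure (ae_restrict_mem measurableSet_Ioo) _

lemma unifd_cube (d : ℕ) : unifd d {y | ∀ k, y k ∈ Icc (-1 : ℝ) 1} = 1 := by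
  have hIcc : unif (Icc (-1) 1) = 1 := by
    rw [← measure_univ (μ := unif)]
    exact (ae_iff_measure_eq measurableSet_Icc.nullMeasurableSet).1
      (ae_unif_mem_Ioo.mono fun y hy => Ioo_subset_Icc_self hy)
  rw [show {y : Fin d → ℝ | ∀ k, y k ∈ Icc (-1 : ℝ) 1} = univ.pi fun _ => Icc (-1) 1 by
    ext; simp only [mem_univ_pi, mem_ofPred_eq], unifd, Measure.pi_pi]
  simp [hIcc]

lemma prodSublevel_of_one_le (d : ℕ) {s : ℝ} (hs : 1 ≤ s) :
    prodSublevel d s = {y | ∀ k, y k ∈ Icc (-1 : ℝ) 1} := by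
  ext y
  refine ⟨And.left, fun hy => ⟨hy, le_trans ?_ hs⟩⟩
  exact Finset.prod_le_one (fun k _ => by nlinarith [(hy k).1, (hy k).2])
    (fun k _ => by nlinarith [(hy k).1, (hy k).2])

lemma unifd_prodSublevel_of_one_le (d : ℕ) {s : ℝ} (hs : 1 ≤ s) :
    unifd d (prodSublevel d s) = 1 := by
  rw [prodSublevel_of_one_le d hs, unifd_cube]

lemma prodSublevel_zero_of_lt_one {s : ℝ} (hs : s < 1) : prodSublevel 0 s = ∅ := by
  ext y
  simp [prodSublevel, hs]

/-- At `y = ±1` the quotient is junk (`s / 0 = 0`), but these points are `unif`-null. -/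
lemma unifd_succ_prodSublevel_eq_lintegral (d : ℕ) (s : ℝ) :
    unifd (d + 1) (prodSublevel (d + 1) s)
      = ∫⁻ y, unifd d (prodSublevel d (s / (1 - y ^ 2))) ∂unif := by
  set S : Set (ℝ × (Fin d → ℝ)) :=
    {p | (p.1 ∈ Icc (-1 : ℝ) 1 ∧ ∀ k, p.2 k ∈ Icc (-1 : ℝ) 1)
      ∧ (1 - p.1 ^ 2) * ∏ k, (1 - p.2 k ^ 2) ≤ s}
  have hS : MeasurableSet S :=
    ((measurableSet_Icc.preimage measurable_fst).inter
      ((measurableSet_cube d).preimage measurable_snd)).inter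
      (measurableSet_le ((measurable_const.sub (measurable_fst.pow_const 2)).mul
        ((measurable_prod_one_sub_sq d).comp measurable_snd)) measurable_const)
  have hpre : MeasurableEquiv.piFinSuccAbove (fun _ : Fin (d + 1) => ℝ) 0 ⁻¹' S
      = prodSublevel (d + 1) s := by
    ext f
    simp only [S, prodSublevel, mem_preimage, MeasurableEquiv.piFinSuccAbove_apply,
      mem_ofPred_eq, Fin.succAbove_zero, Fin.insertNthEquiv, Equiv.coe_fn_symm_mk,
      Fin.removeNth_zero, Fin.tail_def]
    rw [Fin.forall_fin_succ, Fin.prod_univ_succ]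
  rw [← hpre, unifd, (measurePreserving_piFinSuccAbove (fun _ : Fin (d + 1) => unif) 0)
    |>.measure_preimage hS.nullMeasurableSet, Measure.prod_apply hS]
  refine lintegral_congr_ae (ae_unif_mem_Ioo.mono fun y hy => ?_)
  have hy2 : 0 < 1 - y ^ 2 := by nlinarith [hy.1, hy.2]
  change unifd d _ = unifd d _
  congr 1
  ext z
  simp only [S, prodSublevel, mem_preimage, mem_ofPred_eq, Ioo_subset_Icc_self hy, true_and,
    le_div_iff₀ hy2, mul_comm]

lemma lintegral_unif_of_even {f : ℝ → ℝ≥0∞} (hf : ∀ y, f (-y) = f y) :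
    ∫⁻ y, f y ∂unif = ∫⁻ y in Ioo 0 1, f y := by
  have hneg : ∫⁻ y in Ioo (-1) 0, f y = ∫⁻ y in Ioo 0 1, f y := by
    have := (Measure.measurePreserving_neg (volume : Measure ℝ)).setLIntegral_comp_preimage_emb
      measurableEmbedding_neg f (Ioo 0 1)
    simpa [hf] using this
  rw [unif_eq_smul_restrict_Ioo, lintegral_smul_measure, ← Ioo_union_Ico_eq_Ioo (by norm_num)
    zero_le_one, lintegral_union measurableSet_Ico
      ((Iio_disjoint_Ici le_rfl).mono Ioo_subset_Iio_self Ico_subset_Ici_self), hneg,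
    setLIntegral_congr Ioo_ae_eq_Ico.symm, ← two_mul, smul_eq_mul, ← mul_assoc,
    ENNReal.inv_mul_cancel two_ne_zero ENNReal.ofNat_ne_top, one_mul]

lemma unifd_succ_prodSublevel_eq_setLIntegral_add (d : ℕ) {s : ℝ} (hs0 : 0 ≤ s) (hs1 : s ≤ 1) :
    unifd (d + 1) (prodSublevel (d + 1) s)
      = (∫⁻ y in Ioo 0 √(1 - s), unifd d (prodSublevel d (s / (1 - y ^ 2))))
        + ENNReal.ofReal (1 - √(1 - s)) := by
  set x₀ := √(1 - s)
  have hx₀ : 0 ≤ x₀ := sqrt_nonneg _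
  have hx₁ : x₀ ≤ 1 := sqrt_le_one.2 (by linarith)
  have hx₀sq : x₀ ^ 2 = 1 - s := sq_sqrt (by linarith)
  have htail : ∀ y ∈ Ico x₀ 1, unifd d (prodSublevel d (s / (1 - y ^ 2))) = 1 := by
    intro y hy
    have : 0 < 1 - y ^ 2 := by nlinarith [hy.1, hy.2]
    refine unifd_prodSublevel_of_one_le d ((one_le_div this).2 ?_)
    nlinarith [hy.1]
  rw [unifd_succ_prodSublevel_eq_lintegral, lintegral_unif_of_even fun y => by rw [neg_sq],
    setLIntegral_congr Ioo_ae_eq_Ico, ← Ico_union_Ico_eq_Ico hx₀ hx₁,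
    lintegral_union measurableSet_Ico Ico_disjoint_Ico_same, setLIntegral_congr Ioo_ae_eq_Ico.symm,
    setLIntegral_congr_fun measurableSet_Ico htail, setLIntegral_one, Real.volume_Ico]

lemma unifd_succ_prodSublevel_le_of_le {d m : ℕ} {s C K : ℝ} (hs0 : 0 < s) (hs1 : s ≤ 1)
    (hC : 0 ≤ C) (hK : artanh √(1 - s) ≤ K)
    (h : ∀ y ∈ Ioo 0 √(1 - s), unifd d (prodSublevel d (s / (1 - y ^ 2)))
      ≤ ENNReal.ofReal (C * ((K - artanh y) ^ m / (1 - y ^ 2)))) :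
    unifd (d + 1) (prodSublevel (d + 1) s) ≤ ENNReal.ofReal (1 - √(1 - s))
      + ENNReal.ofReal (C * ((K ^ (m + 1) - (K - artanh √(1 - s)) ^ (m + 1)) / (m + 1))) := by
  obtain ⟨hx0, hx1⟩ := sqrt_one_sub_mem_Ico hs0
  rw [unifd_succ_prodSublevel_eq_setLIntegral_add d hs0.le hs1, add_comm,
    ← setLIntegral_artanh_pow_div m hC hx0 hx1 hK]
  gcongr 1
  exact setLIntegral_mono' measurableSet_Ioo h

lemma le_unifd_succ_prodSublevel_of_le {d m : ℕ} {s C K : ℝ} (hs0 : 0 < s) (hs1 : s ≤ 1)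
    (hC : 0 ≤ C) (hK : artanh √(1 - s) ≤ K)
    (h : ∀ y ∈ Ioo 0 √(1 - s), ENNReal.ofReal (C * ((K - artanh y) ^ m / (1 - y ^ 2)))
      ≤ unifd d (prodSublevel d (s / (1 - y ^ 2)))) :
    ENNReal.ofReal (1 - √(1 - s))
      + ENNReal.ofReal (C * ((K ^ (m + 1) - (K - artanh √(1 - s)) ^ (m + 1)) / (m + 1)))
      ≤ unifd (d + 1) (prodSublevel (d + 1) s) := by
  obtain ⟨hx0, hx1⟩ := sqrt_one_sub_mem_Ico hs0
  rw [unifd_succ_prodSublevel_eq_setLIntegral_add d hs0.le hs1, add_comm,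
    ← setLIntegral_artanh_pow_div m hC hx0 hx1 hK]
  gcongr 1
  exact setLIntegral_mono' measurableSet_Ioo h

theorem unifd_prodSublevel_le (m : ℕ) {s : ℝ} (hs0 : 0 < s) (hs1 : s ≤ 1) :
    unifd (m + 1) (prodSublevel (m + 1) s)
      ≤ ENNReal.ofReal (s * (-log s / 2 + (m + 1) * log 2 + 1) ^ m / m !) := by
  induction m generalizing s with
  | zero =>
    rw [unifd_succ_prodSublevel_eq_setLIntegral_add 0 hs0.le hs1,
      setLIntegral_congr_fun measurableSet_Ioo (g := fun _ => 0) fun y hy => ?_, lintegral_zero,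
      zero_add]
    · simpa using ENNReal.ofReal_le_ofReal (one_sub_sqrt_one_sub_le hs0.le hs1)
    · rw [prodSublevel_zero_of_lt_one (div_one_sub_sq_mem_Ioo hs0 hy).2, measure_empty]
  | succ m ih =>
    have hlog2 := half_lt_log_two
    obtain ⟨hx0, hx1⟩ := artanh_sqrt_one_sub_mem_Icc hs0 hs1
    set K := -log s / 2 + ((m + 1 : ℕ) + 1) * log 2 + 1 with hK
    push_cast at hK
    set A := K - artanh √(1 - s) with hA
    have hc : 0 < (m + 1) * log 2 + 1 := by positivity
    have hA0 : (m + 1) * log 2 + 1 ≤ A := by linarith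
    have hAK : A ≤ K := by linarith [log_nonpos hs0.le hs1]
    have hfact : ((m + 1)! : ℝ) ≤ A ^ (m + 1) := by
      refine (factorial_le_pow_log_two (m + 1)).trans (pow_le_pow_left₀ (by positivity) ?_ _)
      push_cast; linarith
    refine (unifd_succ_prodSublevel_le_of_le (m := m) (C := s / m !) (K := K) hs0 hs1
      (by positivity) (by linarith) fun y hy => ?_).trans ?_
    · obtain ⟨ht0, ht1⟩ := div_one_sub_sq_mem_Ioo hs0 hy
      obtain ⟨hl0, hl1⟩ := neg_log_div_one_sub_sq_mem_Icc hs0 hy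
      refine (ih ht0 ht1.le).trans (ENNReal.ofReal_le_ofReal ?_)
      calc s / (1 - y ^ 2) * (-log (s / (1 - y ^ 2)) / 2 + (m + 1) * log 2 + 1) ^ m / m !
          ≤ s / (1 - y ^ 2) * (K - artanh y) ^ m / m ! := by
            gcongr
            · nlinarith [log_nonpos ht0.le ht1.le]
            · linarith
        _ = s / m ! * ((K - artanh y) ^ m / (1 - y ^ 2)) := by ring
    · have htail : 1 - √(1 - s) ≤ s * A ^ (m + 1) / (m + 1)! := by
        refine (one_sub_sqrt_one_sub_le hs0.le hs1).trans ?_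
        rw [mul_div_assoc]
        exact le_mul_of_one_le_right hs0.le ((one_le_div (by positivity)).2 hfact)
      have hsplit : s / m ! * ((K ^ (m + 1) - A ^ (m + 1)) / (m + 1))
          = s * K ^ (m + 1) / (m + 1)! - s * A ^ (m + 1) / (m + 1)! := by
        rw [Nat.factorial_succ]; push_cast; field_simp
      rw [hsplit, ← ENNReal.ofReal_add (sub_nonneg.2 (sqrt_one_sub_mem_Ico hs0).2.le)
        (sub_nonneg.2 (by gcongr; linarith))]
      exact ENNReal.ofReal_le_ofReal (by linarith)

theorem lt_unifd_prodSublevel (m : ℕ) {s : ℝ} (hs0 : 0 < s) (hs1 : s ≤ 1) :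
    ENNReal.ofReal (s / 2 * (-log s / 2 + log 2) ^ m / m !)
      < unifd (m + 1) (prodSublevel (m + 1) s) := by
  induction m generalizing s with
  | zero =>
    have hgap := half_lt_one_sub_sqrt_one_sub hs0 hs1
    rw [unifd_succ_prodSublevel_eq_setLIntegral_add 0 hs0.le hs1]
    refine lt_of_lt_of_le ?_ le_add_self
    simpa using (ENNReal.ofReal_lt_ofReal_iff (by linarith)).2 hgap
  | succ m ih =>
    have hlog2 := half_lt_log_two
    obtain ⟨hx0, hx1⟩ := artanh_sqrt_one_sub_mem_Icc hs0 hs1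
    set P := -log s / 2 + log 2 with hP
    set B := P - artanh √(1 - s) with hB
    have hB0 : 0 ≤ B := by linarith
    have hBP : B ≤ P := by linarith [log_nonpos hs0.le hs1]
    refine lt_of_lt_of_le ?_ (le_unifd_succ_prodSublevel_of_le (m := m) (C := s / (2 * m !))
      (K := P) hs0 hs1 (by positivity) (by linarith) fun y hy => ?_)
    · have htail : s / 2 * B ^ (m + 1) / (m + 1)! < 1 - √(1 - s) := by
        refine lt_of_le_of_lt ?_ (half_lt_one_sub_sqrt_one_sub hs0 hs1)
        rw [mul_div_assoc]
        refine mul_le_of_le_one_right (by positivity) (div_le_one_of_le₀ ?_ (by positivity))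
        exact (pow_le_one₀ hB0 (by linarith [log_two_lt_d9])).trans
          (by exact_mod_cast (m + 1).factorial_pos)
      have hsplit : s / (2 * m !) * ((P ^ (m + 1) - B ^ (m + 1)) / (m + 1))
          = s / 2 * P ^ (m + 1) / (m + 1)! - s / 2 * B ^ (m + 1) / (m + 1)! := by
        rw [Nat.factorial_succ]; push_cast; field_simp
      have hBP' : s / 2 * B ^ (m + 1) / (m + 1)! ≤ s / 2 * P ^ (m + 1) / (m + 1)! := by gcongr
      have : 0 ≤ s / 2 * B ^ (m + 1) / (m + 1)! := by positivity
      have : 0 < 1 - √(1 - s) := by linarith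
      rw [hsplit, ← ENNReal.ofReal_add (by linarith) (by linarith)]
      exact (ENNReal.ofReal_lt_ofReal_iff (by linarith)).2 (by linarith)
    · obtain ⟨ht0, ht1⟩ := div_one_sub_sq_mem_Ioo hs0 hy
      obtain ⟨hl0, hl1⟩ := neg_log_div_one_sub_sq_mem_Icc hs0 hy
      have hyx : artanh y ≤ artanh √(1 - s) :=
        artanh_le_artanh (by linarith [hy.1]) (sqrt_one_sub_mem_Ico hs0).2 hy.2.le
      refine le_trans (ENNReal.ofReal_le_ofReal ?_) (ih ht0 ht1.le).le
      calc s / (2 * m !) * ((P - artanh y) ^ m / (1 - y ^ 2))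
          = s / (1 - y ^ 2) / 2 * (P - artanh y) ^ m / m ! := by ring
        _ ≤ s / (1 - y ^ 2) / 2 * (-log (s / (1 - y ^ 2)) / 2 + log 2) ^ m / m ! := by
            gcongr
            · linarith
            · linarith

theorem stmt_15 (d : ℕ) (hd : 1 ≤ d) (r : ℝ) (hr0 : 0 < r) (hr1 : r ≤ 1) :
    ENNReal.ofReal (r / (2 * Nat.factorial (d - 1))
        * Real.log (1 / Real.sqrt r) ^ (d - 1))
      < (unifd d) {y | (∀ k, y k ∈ Set.Icc (-1 : ℝ) 1) ∧ ∏ k, (1 - y k ^ 2) ≤ r} ∧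
    (unifd d) {y | (∀ k, y k ∈ Set.Icc (-1 : ℝ) 1) ∧ ∏ k, (1 - y k ^ 2) ≤ r}
      ≤ ENNReal.ofReal (r / Nat.factorial (d - 1)
          * Real.log (2 ^ d * Real.exp 1 / Real.sqrt r) ^ (d - 1)) := by
  obtain ⟨m, rfl⟩ : ∃ m, d = m + 1 := ⟨d - 1, by omega⟩
  have hlog : log (1 / √r) = -log r / 2 := by
    rw [one_div, log_inv, log_sqrt hr0.le]; ring
  have hlog' : log (2 ^ (m + 1) * exp 1 / √r) = -log r / 2 + (m + 1) * log 2 + 1 := by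
    rw [log_div (by positivity) (sqrt_pos.2 hr0).ne', log_mul (by positivity) (exp_pos 1).ne',
      log_pow, log_exp, log_sqrt hr0.le]
    push_cast; ring
  simp only [Nat.add_sub_cancel, hlog, hlog']
  refine ⟨lt_of_le_of_lt (ENNReal.ofReal_le_ofReal ?_) (lt_unifd_prodSublevel m hr0 hr1),
    (unifd_prodSublevel_le m hr0 hr1).trans_eq (by ring_nf)⟩
  have := log_nonpos hr0.le hr1
  calc r / (2 * m !) * (-log r / 2) ^ m = r / 2 * (-log r / 2) ^ m / m ! := by ring
    _ ≤ r / 2 * (-log r / 2 + log 2) ^ m / m ! := by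
      gcongr
      · linarith
      · linarith [half_lt_log_two]

end
end
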